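/- arXiv:2208.06016 — 3 statements merged into one kernel-verified Lean document; each statement's English description precedes it below -/
import Mathlib

section
/- (Proposition 1, exact form for integer shape.) Let D be the distance from a uniformly random point of the disk of radius R > 0 (centered at the origin, at height 0) to the point (0,0,h) with h > 0, and let G be a random variable independent of D with a Gamma distribution of integer shape k ≥ 1 and scale θ > 0. Then for every w > 0 the coverage probability satisfies P(D^{-2} G > w) = (θ/(R² w)) · Σ_{i=0}^{k−1} [γ(i+1, (h²+R²)w/θ) − γ(i+1, h² w/θ)] / i!. -/
/-!
Conditioning on `D`, independence turns the probability into the disk average of the Gamma tail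
`P(G > w D²)`. For integer shape `k` this tail is `erlangTail k (w D² / θ)`, since the Gamma
density is the derivative of `-erlangTail k (x / θ)`. The squared radius `|p|²` of a uniform point
of the disk is uniform on `[0, R²]` (the disk of radius `√u` has area `π u`), so the average is
`R⁻²` times a one-dimensional integral of `erlangTail k` over `[h² w / θ, (h² + R²) w / θ]`, and
integrating the terms `t ^ i e^{-t} / i!` one by one gives the lower incomplete gamma functions.
-/

open MeasureTheory ProbabilityTheory Real

/-- The closed disk of radius `R` centered at the origin in the plane. -/
def diskSet (R : ℝ) : Set (ℝ × ℝ) := {p | p.1 ^ 2 + p.2 ^ 2 ≤ R ^ 2}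

/-- The uniform probability measure on the closed disk of radius `R`. -/
noncomputable def diskUniform (R : ℝ) : Measure (ℝ × ℝ) :=
  (volume (diskSet R))⁻¹ • volume.restrict (diskSet R)

/-- The Gamma distribution with shape `k` and scale `θ`, given by its density
`x ^ (k-1) * exp (-x/θ) / (Γ k * θ ^ k)` on `(0, ∞)`. -/
noncomputable def gammaScaleMeasure (k θ : ℝ) : Measure ℝ :=
  volume.withDensity fun x =>
    if 0 < x then
      ENNReal.ofReal (x ^ (k - 1) * Real.exp (-x / θ) / (Real.Gamma k * θ ^ k)) else 0

/-- The lower incomplete gamma function `γ(s, x) = ∫ t in (0, x), t ^ (s-1) * exp (-t)`. -/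
noncomputable def lowerGamma (s x : ℝ) : ℝ := ∫ t in (0:ℝ)..x, t ^ (s - 1) * Real.exp (-t)

open Finset Filter Topology
open scoped Nat

/-- `P(N < k)` for `N` Poisson of mean `t`, which is also `P(Γ > t)` for `Γ ~ Gamma(k, 1)`. -/
noncomputable def erlangTail (k : ℕ) (t : ℝ) : ℝ := ∑ i ∈ range k, t ^ i * exp (-t) / i !

@[fun_prop]
lemma continuous_erlangTail (k : ℕ) : Continuous (erlangTail k) := by
  unfold erlangTail; fun_prop

lemma erlangTail_nonneg (k : ℕ) {t : ℝ} (ht : 0 ≤ t) : 0 ≤ erlangTail k t := by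
  unfold erlangTail; positivity

lemma hasDerivAt_erlangTail_succ (n : ℕ) (t : ℝ) :
    HasDerivAt (erlangTail (n + 1)) (-(t ^ n * exp (-t) / n !)) t := by
  induction n with
  | zero =>
    have h1 : erlangTail 1 = fun t => exp (-t) := by funext t; simp [erlangTail]
    simpa [h1] using (hasDerivAt_neg t).exp
  | succ n ih =>
    have hterm : HasDerivAt (fun t => t ^ (n + 1) * exp (-t) / (n + 1)!)
        (((n + 1) * t ^ n * exp (-t) - t ^ (n + 1) * exp (-t)) / (n + 1)!) t := by
      have := ((hasDerivAt_pow (n + 1) t).mul (hasDerivAt_neg t).exp).div_const ((n + 1)! : ℝ)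
      refine this.congr_deriv ?_
      push_cast; ring
    have hsplit : erlangTail (n + 2) =
        fun t => erlangTail (n + 1) t + t ^ (n + 1) * exp (-t) / (n + 1)! := by
      funext t; exact sum_range_succ _ _
    rw [hsplit]
    refine (ih.add hterm).congr_deriv ?_
    rw [Nat.factorial_succ]; push_cast
    field_simp
    ring

lemma tendsto_erlangTail_atTop (k : ℕ) : Tendsto (erlangTail k) atTop (𝓝 0) := by
  unfold erlangTail
  simpa using tendsto_finsetSum (range k) fun i _ =>
    (tendsto_pow_mul_exp_neg_atTop_nhds_zero i).div_const (i ! : ℝ)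

lemma lowerGamma_natCast_add_one (i : ℕ) (x : ℝ) :
    lowerGamma (i + 1) x = ∫ t in (0 : ℝ)..x, t ^ i * exp (-t) := by
  simp only [lowerGamma, add_sub_cancel_right, rpow_natCast]

lemma integral_erlangTail (k : ℕ) (a b : ℝ) :
    ∫ t in a..b, erlangTail k t =
      ∑ i ∈ range k, (lowerGamma (i + 1) b - lowerGamma (i + 1) a) / i ! := by
  have hint (i : ℕ) (a b : ℝ) : IntervalIntegrable (fun t => t ^ i * exp (-t)) volume a b :=
    (by fun_prop : Continuous fun t : ℝ => t ^ i * exp (-t)).intervalIntegrable a b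
  unfold erlangTail
  rw [intervalIntegral.integral_finsetSum fun i _ => (hint i a b).div_const _]
  refine sum_congr rfl fun i _ => ?_
  rw [intervalIntegral.integral_div, lowerGamma_natCast_add_one, lowerGamma_natCast_add_one,
    intervalIntegral.integral_interval_sub_left (hint i 0 b) (hint i 0 a)]

lemma gammaScaleMeasure_Ioi {k : ℕ} (hk : 0 < k) {θ s : ℝ} (hθ : 0 < θ) (hs : 0 ≤ s) :
    gammaScaleMeasure k θ (Set.Ioi s) = ENNReal.ofReal (erlangTail k (s / θ)) := by
  obtain ⟨n, rfl⟩ : ∃ n, k = n + 1 := ⟨k - 1, by omega⟩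
  set g' : ℝ → ℝ := fun x => (x / θ) ^ n * exp (-(x / θ)) / n ! / θ
  have hderiv : ∀ x ∈ Set.Ici s, HasDerivAt (fun x => -erlangTail (n + 1) (x / θ)) (g' x) x := by
    intro x _
    refine ((hasDerivAt_erlangTail_succ n (x / θ)).comp x ((hasDerivAt_id x).div_const θ)).neg
      |>.congr_deriv ?_
    simp only [g']; ring
  have hg'_nonneg : ∀ x ∈ Set.Ioi s, 0 ≤ g' x := fun x hx => by
    have : 0 ≤ x := hs.trans hx.out.le
    positivity
  have hlim : Tendsto (fun x => -erlangTail (n + 1) (x / θ)) atTop (𝓝 0) := by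
    simpa using ((tendsto_erlangTail_atTop (n + 1)).comp
      (tendsto_id.atTop_div_const hθ)).neg
  have hdensity : ∀ x ∈ Set.Ioi s, (if 0 < x then ENNReal.ofReal (x ^ (((n + 1 : ℕ) : ℝ) - 1) *
      exp (-x / θ) / (Gamma ((n + 1 : ℕ) : ℝ) * θ ^ ((n + 1 : ℕ) : ℝ))) else 0) =
      ENNReal.ofReal (g' x) := by
    intro x hx
    rw [if_pos (hs.trans_lt hx)]
    congr 1
    rw [show (((n + 1 : ℕ) : ℝ) - 1) = (n : ℕ) by push_cast; ring, rpow_natCast, rpow_natCast,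
      Nat.cast_add_one, Gamma_nat_eq_factorial]
    simp only [g', div_pow]
    field_simp
    ring
  rw [gammaScaleMeasure, withDensity_apply _ measurableSet_Ioi,
    setLIntegral_congr_fun measurableSet_Ioi hdensity,
    ← ofReal_integral_eq_lintegral_ofReal (integrableOn_Ioi_deriv_of_nonneg' hderiv hg'_nonneg hlim)
      ((ae_restrict_iff' measurableSet_Ioi).mpr (ae_of_all _ hg'_nonneg)),
    integral_Ioi_of_hasDerivAt_of_nonneg' hderiv hg'_nonneg hlim, zero_sub, neg_neg]

lemma volume_sq_add_sq_le (u : ℝ) :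
    volume {p : ℝ × ℝ | p.1 ^ 2 + p.2 ^ 2 ≤ u} = ENNReal.ofReal (π * u) := by
  rcases lt_or_ge u 0 with hu | hu
  · have hempty : {p : ℝ × ℝ | p.1 ^ 2 + p.2 ^ 2 ≤ u} = ∅ :=
      Set.eq_empty_of_forall_notMem fun p hp => by
        nlinarith [sq_nonneg p.1, sq_nonneg p.2, hp.out]
    rw [hempty, measure_empty, ENNReal.ofReal_of_nonpos (by nlinarith [pi_pos])]
  have hball : Complex.measurableEquivRealProd ⁻¹' {p | p.1 ^ 2 + p.2 ^ 2 ≤ u} =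
      Metric.closedBall 0 (√u) := by
    ext z
    rw [Set.mem_preimage, Metric.mem_closedBall, dist_zero_right, ← sq_le_sq₀ (norm_nonneg z)
      (sqrt_nonneg u), sq_sqrt hu, Complex.sq_norm, Complex.normSq_apply]
    simp only [Complex.measurableEquivRealProd_apply, Set.mem_ofPred_eq, sq]
  rw [← Complex.volume_preserving_equiv_real_prod.measure_preimage
    (measurableSet_le (by fun_prop) (by fun_prop)).nullMeasurableSet, hball,
    Complex.volume_closedBall, ← ENNReal.ofReal_pow (sqrt_nonneg u), sq_sqrt hu,
    ← ENNReal.ofReal_coe_nnreal, NNReal.coe_real_pi, ← ENNReal.ofReal_mul hu, mul_comm]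

lemma map_sq_add_sq_diskUniform {R : ℝ} (hR : R ≠ 0) :
    (diskUniform R).map (fun p : ℝ × ℝ => p.1 ^ 2 + p.2 ^ 2) = volume[|Set.Icc 0 (R ^ 2)] := by
  have hm : Measurable fun p : ℝ × ℝ => p.1 ^ 2 + p.2 ^ 2 := by fun_prop
  have hdisk : MeasurableSet (diskSet R) := measurableSet_le hm measurable_const
  refine (Measure.ext_of_Iic _ _ fun u => ?_).symm
  have hdisk_inter : diskSet R ∩ (fun p : ℝ × ℝ => p.1 ^ 2 + p.2 ^ 2) ⁻¹' Set.Iic u =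
      {p | p.1 ^ 2 + p.2 ^ 2 ≤ min (R ^ 2) u} := by
    ext p; simp [diskSet]
  have hIcc_inter : Set.Icc 0 (R ^ 2) ∩ Set.Iic u = Set.Icc 0 (min (R ^ 2) u) := by
    ext x; simp [and_assoc]
  have hR2 : 0 < R ^ 2 := by positivity
  rw [Measure.map_apply hm measurableSet_Iic]
  change _ = volume[|diskSet R] _
  rw [cond_apply hdisk, cond_apply measurableSet_Icc, hdisk_inter, hIcc_inter,
    Real.volume_Icc, Real.volume_Icc, diskSet, volume_sq_add_sq_le, volume_sq_add_sq_le,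
    sub_zero, sub_zero,
    ← ENNReal.ofReal_inv_of_pos hR2, ← ENNReal.ofReal_inv_of_pos (by positivity),
    ← ENNReal.ofReal_mul (by positivity), ← ENNReal.ofReal_mul (by positivity)]
  congr 1
  field_simp

lemma ProbabilityTheory.IndepFun.measure_preimage_prodMk {Ω α β : Type*} [MeasurableSpace Ω]
    [MeasurableSpace α] [MeasurableSpace β] {P : Measure Ω} [IsFiniteMeasure P]
    {X : Ω → α} {Y : Ω → β} (hX : Measurable X) (hY : Measurable Y) (hXY : IndepFun X Y P)
    {S : Set (α × β)} (hS : MeasurableSet S) :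
    P ((fun ω => (X ω, Y ω)) ⁻¹' S) = ∫⁻ x, P.map Y (Prod.mk x ⁻¹' S) ∂P.map X := by
  rw [← Measure.map_apply (hX.prodMk hY) hS,
    (indepFun_iff_map_prod_eq_prod_map_map hX.aemeasurable hY.aemeasurable).mp hXY,
    Measure.prod_apply hS]

lemma lintegral_ofReal_cond_Icc {f : ℝ → ℝ} {a b : ℝ} (hab : a < b)
    (hf : ContinuousOn f (Set.Icc a b)) (hf_nonneg : ∀ x ∈ Set.Icc a b, 0 ≤ f x) :
    ∫⁻ x, ENNReal.ofReal (f x) ∂volume[|Set.Icc a b] =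
      ENNReal.ofReal ((b - a)⁻¹ * ∫ x in a..b, f x) := by
  rw [ProbabilityTheory.cond, lintegral_smul_measure, Real.volume_Icc,
    ← ofReal_integral_eq_lintegral_ofReal (hf.integrableOn_Icc)
      ((ae_restrict_iff' measurableSet_Icc).mpr (ae_of_all _ hf_nonneg)),
    ← ENNReal.ofReal_inv_of_pos (sub_pos.mpr hab), smul_eq_mul,
    ← ENNReal.ofReal_mul (inv_nonneg.mpr (sub_pos.mpr hab).le),
    integral_Icc_eq_integral_Ioc, intervalIntegral.integral_of_le hab.le]

theorem coverage_probability (Ω : Type*) [MeasurableSpace Ω] (P : Measure Ω)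
    [IsProbabilityMeasure P] (R h θ : ℝ) (k : ℕ) (hR : 0 < R) (hh : 0 < h)
    (hθ : 0 < θ) (hk : 1 ≤ k) (D G : Ω → ℝ) (hDm : Measurable D) (hGm : Measurable G)
    (hD : Measure.map D P =
      Measure.map (fun p : ℝ × ℝ => Real.sqrt (p.1 ^ 2 + p.2 ^ 2 + h ^ 2)) (diskUniform R))
    (hG : Measure.map G P = gammaScaleMeasure k θ)
    (hind : IndepFun D G P) (w : ℝ) (hw : 0 < w) :
    P {ω | w < ((D ω) ^ 2)⁻¹ * G ω} =
      ENNReal.ofReal (θ / (R ^ 2 * w) * ∑ i ∈ Finset.range k,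
        (lowerGamma ((i : ℝ) + 1) ((h ^ 2 + R ^ 2) * w / θ) -
          lowerGamma ((i : ℝ) + 1) (h ^ 2 * w / θ)) / (Nat.factorial i)) := by
  set S : Set (ℝ × ℝ) := {p | w < (p.1 ^ 2)⁻¹ * p.2}
  set f : ℝ → ℝ := fun q => erlangTail k (w / θ * q + h ^ 2 * w / θ)
  have hS : MeasurableSet S := measurableSet_lt measurable_const (by fun_prop)
  have hslice (p : ℝ × ℝ) : gammaScaleMeasure k θ (Prod.mk √(p.1 ^ 2 + p.2 ^ 2 + h ^ 2) ⁻¹' S) =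
      ENNReal.ofReal (f (p.1 ^ 2 + p.2 ^ 2)) := by
    have hd : 0 < p.1 ^ 2 + p.2 ^ 2 + h ^ 2 := by positivity
    have hIoi : Prod.mk √(p.1 ^ 2 + p.2 ^ 2 + h ^ 2) ⁻¹' S =
        Set.Ioi (w * (p.1 ^ 2 + p.2 ^ 2 + h ^ 2)) := by
      ext g
      simp [S, sq_sqrt hd.le, inv_mul_eq_div, lt_div_iff₀ hd]
    rw [hIoi, gammaScaleMeasure_Ioi hk hθ (by positivity)]
    congr 2
    ring
  have hf_integral : ∫ q in (0 : ℝ)..R ^ 2, f q = θ / w * ∑ i ∈ Finset.range k,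
      (lowerGamma ((i : ℝ) + 1) ((h ^ 2 + R ^ 2) * w / θ) -
        lowerGamma ((i : ℝ) + 1) (h ^ 2 * w / θ)) / (Nat.factorial i) := by
    rw [intervalIntegral.integral_comp_mul_add (erlangTail k) (div_pos hw hθ).ne',
      integral_erlangTail, smul_eq_mul, inv_div]
    ring_nf
  calc P {ω | w < ((D ω) ^ 2)⁻¹ * G ω}
      = ∫⁻ d, P.map G (Prod.mk d ⁻¹' S) ∂P.map D := hind.measure_preimage_prodMk hDm hGm hS
    _ = ∫⁻ p, ENNReal.ofReal (f (p.1 ^ 2 + p.2 ^ 2)) ∂diskUniform R := by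
        rw [hD, lintegral_map (measurable_measure_prodMk_left hS) (by fun_prop), hG]
        exact lintegral_congr hslice
    _ = ∫⁻ q, ENNReal.ofReal (f q) ∂volume[|Set.Icc 0 (R ^ 2)] := by
        rw [← map_sq_add_sq_diskUniform hR.ne', lintegral_map (by fun_prop) (by fun_prop)]
    _ = ENNReal.ofReal ((R ^ 2 - 0)⁻¹ * ∫ q in (0 : ℝ)..R ^ 2, f q) :=
        lintegral_ofReal_cond_Icc (by positivity) (by fun_prop) fun q hq =>
          erlangTail_nonneg k (by have := hq.1; positivity)
    _ = _ := by
        rw [hf_integral, sub_zero]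
        congr 1
        field_simp
end

section
/- For every integer k ≥ 1 and reals θ > 0, w > 0, h > 0, R > 0, the integral identity ∫_{1/(h²+R²)}^{1/h²} [γ(k, w/(θ y)) / Γ(k)] · [1/(R² y²)] dy = 1 − (θ/(R² w)) · Σ_{i=0}^{k−1} [γ(i+1, (h²+R²)w/θ) − γ(i+1, h² w/θ)] / i! holds. -/
open MeasureTheory Real

/-!
For a positive integer `k = n + 1`, `γ(n + 1, x) / n! = 1 - ∑_{i ≤ n} xⁱ e⁻ˣ / i!`, the tail of a
Poisson law of mean `x`: the derivative of the sum telescopes to `-xⁿ e⁻ˣ / n!`. The substitution `u = w / (θ y)`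
turns the outage integral into `θ / (R² w)` times `∫ γ(k, u) / Γ(k) du` over
`[h² w / θ, (h² + R²) w / θ]`, and integrating the Poisson sum term by term gives back
differences of incomplete gamma functions.
-/

open Finset Nat

section LowerGamma

variable {s : ℝ}

theorem intervalIntegrable_rpow_sub_one_mul_exp_neg (hs : 0 < s) (a b : ℝ) :
    IntervalIntegrable (fun t => t ^ (s - 1) * exp (-t)) volume a b :=
  (intervalIntegral.intervalIntegrable_rpow' (by linarith)).mul_continuousOn (by fun_prop)

theorem continuous_lowerGamma (hs : 0 < s) : Continuous (lowerGamma s) :=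
  intervalIntegral.continuous_primitive (intervalIntegrable_rpow_sub_one_mul_exp_neg hs) 0

theorem lowerGamma_sub_lowerGamma (hs : 0 < s) (a b : ℝ) :
    lowerGamma s b - lowerGamma s a = ∫ t in a..b, t ^ (s - 1) * exp (-t) :=
  intervalIntegral.integral_interval_sub_left (intervalIntegrable_rpow_sub_one_mul_exp_neg hs 0 b)
    (intervalIntegrable_rpow_sub_one_mul_exp_neg hs 0 a)

end LowerGamma

theorem hasDerivAt_sum_range_pow_mul_exp_neg_div_factorial (n : ℕ) (t : ℝ) :
    HasDerivAt (fun t => ∑ i ∈ range (n + 1), t ^ i * exp (-t) / i !)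
      (-(t ^ n * exp (-t) / n !)) t := by
  induction n with
  | zero => simpa using (hasDerivAt_neg t).exp
  | succ n ih =>
    simp_rw [sum_range_succ _ (n + 1)]
    have hterm : HasDerivAt (fun t => t ^ (n + 1) * exp (-t) / (n + 1)!)
        (((n + 1 : ℕ) * t ^ n * exp (-t) - t ^ (n + 1) * exp (-t)) / (n + 1)!) t := by
      refine (((hasDerivAt_pow (n + 1) t).fun_mul (hasDerivAt_neg t).exp).div_const _).congr_deriv ?_
      rw [Nat.add_sub_cancel]
      ring
    refine (ih.fun_add hterm).congr_deriv ?_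
    push_cast [Nat.factorial_succ]
    field_simp
    ring

theorem lowerGamma_natCast_add_one_div_factorial (n : ℕ) (x : ℝ) :
    lowerGamma (n + 1) x / n ! = 1 - ∑ i ∈ range (n + 1), x ^ i * exp (-x) / i ! := by
  have hderiv (t : ℝ) : HasDerivAt (fun t => -∑ i ∈ range (n + 1), t ^ i * exp (-t) / i !)
      (t ^ n * exp (-t) / n !) t := by
    simpa using (hasDerivAt_sum_range_pow_mul_exp_neg_div_factorial n t).fun_neg
  have hint : IntervalIntegrable (fun t : ℝ => t ^ n * exp (-t) / n !) volume 0 x :=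
    (by fun_prop : Continuous fun t : ℝ => t ^ n * exp (-t) / n !).intervalIntegrable 0 x
  have hsum0 : ∑ i ∈ range (n + 1), (0 : ℝ) ^ i * exp (-0) / i ! = 1 := by
    rw [sum_range_succ']
    simp
  have hrpow (t : ℝ) : t ^ ((n : ℝ) + 1 - 1) = t ^ n := by rw [add_sub_cancel_right, rpow_natCast]
  simp only [lowerGamma, hrpow, ← intervalIntegral.integral_div,
    intervalIntegral.integral_eq_sub_of_hasDerivAt (fun t _ => hderiv t) hint, hsum0]
  ring

theorem integral_lowerGamma_natCast_add_one_div_factorial (n : ℕ) (a b : ℝ) :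
    ∫ u in a..b, lowerGamma (n + 1) u / n ! =
      b - a - ∑ i ∈ range (n + 1), (lowerGamma (i + 1) b - lowerGamma (i + 1) a) / i ! := by
  have hcont (i : ℕ) : Continuous fun u : ℝ => u ^ i * exp (-u) / i ! := by fun_prop
  simp_rw [lowerGamma_natCast_add_one_div_factorial]
  rw [intervalIntegral.integral_sub intervalIntegrable_const
      ((continuous_finsetSum _ fun i _ => hcont i).intervalIntegrable _ _),
    intervalIntegral.integral_finsetSum fun i _ => (hcont i).intervalIntegrable _ _]
  congr 1
  · simp
  refine sum_congr rfl fun i _ => ?_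
  rw [intervalIntegral.integral_div, lowerGamma_sub_lowerGamma (by positivity)]
  simp [rpow_natCast]

theorem integral_comp_div_div_sq {g : ℝ → ℝ} (hg : Continuous g) {a b c : ℝ}
    (h0 : (0 : ℝ) ∉ Set.uIcc a b) (hc : c ≠ 0) :
    ∫ y in a..b, g (c / y) / y ^ 2 = (∫ u in c / b..c / a, g u) / c := by
  have hy : ∀ y ∈ Set.uIcc a b, y ≠ 0 := fun y hy => ne_of_mem_of_not_mem hy h0
  have hderiv : ∀ y ∈ Set.uIcc a b, HasDerivAt (fun y => c / y) (-c / y ^ 2) y := by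
    intro y hy0
    have hinv := (hasDerivAt_inv (hy y hy0)).const_mul c
    simp only [← div_eq_mul_inv] at hinv
    exact hinv.congr_deriv (by ring)
  have hsubst := intervalIntegral.integral_comp_mul_deriv hderiv
    (continuousOn_const.div (continuousOn_pow 2) fun y hy0 => pow_ne_zero 2 (hy y hy0)) hg
  rw [intervalIntegral.integral_symm (c / a), ← hsubst, eq_div_iff hc,
    ← intervalIntegral.integral_mul_const, ← intervalIntegral.integral_neg]
  refine intervalIntegral.integral_congr fun y hy0 => ?_
  simp only [Function.comp]
  field_simp [hy y hy0]

theorem outage_integral_closed_form (k : ℕ) (hk : 1 ≤ k) (θ w h R : ℝ)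
    (hθ : 0 < θ) (hw : 0 < w) (hh : 0 < h) (hR : 0 < R) :
    (∫ y in (1 / (h ^ 2 + R ^ 2))..(1 / h ^ 2),
        (lowerGamma k (w / (θ * y)) / Real.Gamma k) * (1 / (R ^ 2 * y ^ 2))) =
      1 - θ / (R ^ 2 * w) * ∑ i ∈ Finset.range k,
        (lowerGamma ((i : ℝ) + 1) ((h ^ 2 + R ^ 2) * w / θ) -
          lowerGamma ((i : ℝ) + 1) (h ^ 2 * w / θ)) / (Nat.factorial i) := by
  obtain ⟨n, rfl⟩ : ∃ n, k = n + 1 := ⟨k - 1, by omega⟩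
  have h0 : (0 : ℝ) ∉ Set.uIcc (1 / (h ^ 2 + R ^ 2)) (1 / h ^ 2) :=
    Set.notMem_uIcc_of_lt (by positivity) (by positivity)
  have hintegrand (y : ℝ) : lowerGamma ((n + 1 : ℕ) : ℝ) (w / (θ * y)) / Gamma ((n + 1 : ℕ) : ℝ) *
      (1 / (R ^ 2 * y ^ 2)) = (R ^ 2)⁻¹ * (lowerGamma (n + 1) (w / θ / y) / n ! / y ^ 2) := by
    rw [Nat.cast_succ, Gamma_nat_eq_factorial, div_div w θ y]
    ring
  simp_rw [hintegrand]
  rw [intervalIntegral.integral_const_mul,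
    integral_comp_div_div_sq (g := fun u => lowerGamma (n + 1) u / n !)
      ((continuous_lowerGamma (by positivity)).div_const _) h0 (by positivity),
    integral_lowerGamma_natCast_add_one_div_factorial]
  have hupper : w / θ / (1 / (h ^ 2 + R ^ 2)) = (h ^ 2 + R ^ 2) * w / θ := by field_simp
  have hlower : w / θ / (1 / h ^ 2) = h ^ 2 * w / θ := by field_simp
  rw [hupper, hlower]
  field_simp
  ring
end

section
/- (Theorem 1, conditional form.) Let A and B be independent random variables with Gamma distributions of integer shapes k_a ≥ 1 and k_b ≥ 1 respectively and common scale θ > 0. Then for every t > 0, P(t − B ≤ A ≤ t) = γ(k_a, t/θ)/Γ(k_a) − γ(k_b, t/θ)/Γ(k_b) + (e^{−t/θ}/(Γ(k_b) θ^{k_b})) · Σ_{μ=0}^{k_a−1} (1/(μ! θ^μ)) · Σ_{ν=0}^{μ} C(μ,ν) (−1)^{μ−ν} t^{k_b+μ} / (k_b + μ − ν), where C(μ,ν) is the binomial coefficient. -/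
/-!
Since `B ≥ 0` almost surely, the event `t - B ≤ A ≤ t` is `{A ≤ t}` with `{A + B < t}` removed,
and by independence `P(A + B < t) = ∫₀ᵗ f_B(b) F_A(t - b) db`. For an integer shape the Gamma
distribution function is `F_A(x) = 1 - e^{-x/θ} ∑_{μ < k_a} (x/θ)^μ / μ!`, so after expanding
`(t - b)^μ` binomially the convolution integral reduces to integrals of powers of `b`.
-/

open MeasureTheory ProbabilityTheory Real

open Set Nat intervalIntegral

theorem hasDerivAt_sum_range_pow_div_factorial (n : ℕ) (y : ℝ) :
    HasDerivAt (fun y : ℝ => ∑ μ ∈ Finset.range (n + 1), y ^ μ / μ !)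
      (∑ μ ∈ Finset.range n, y ^ μ / μ !) y := by
  induction n with
  | zero => simpa using hasDerivAt_const y (1 : ℝ)
  | succ n ih =>
    have hterm : HasDerivAt (fun y : ℝ => y ^ (n + 1) / (n + 1)!) (y ^ n / n !) y := by
      refine ((hasDerivAt_pow (n + 1) y).div_const _).congr_deriv ?_
      rw [factorial_succ, cast_mul, Nat.add_sub_cancel, mul_div_mul_left _ _ (by positivity)]
    rw [Finset.sum_range_succ _ n]
    simp only [Finset.sum_range_succ _ (n + 1)]
    exact ih.add hterm

theorem integral_pow_mul_exp_neg (n : ℕ) (y : ℝ) :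
    ∫ u in (0:ℝ)..y, u ^ n * exp (-u) =
      n ! * (1 - exp (-y) * ∑ μ ∈ Finset.range (n + 1), y ^ μ / μ !) := by
  have hderiv (u : ℝ) : HasDerivAt
      (fun y => n ! * (1 - exp (-y) * ∑ μ ∈ Finset.range (n + 1), y ^ μ / μ !))
      (u ^ n * exp (-u)) u := by
    refine ((((hasDerivAt_neg u).exp.mul
      (hasDerivAt_sum_range_pow_div_factorial n u)).const_sub 1).const_mul _).congr_deriv ?_
    rw [Finset.sum_range_succ]
    field_simp
    ring
  rw [integral_eq_sub_of_hasDerivAt (fun u _ => hderiv u)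
    ((by fun_prop : Continuous fun u : ℝ => u ^ n * exp (-u)).intervalIntegrable 0 y)]
  simp [Finset.sum_range_succ']

theorem lowerGamma_natCast_div_Gamma {n : ℕ} (hn : 1 ≤ n) (y : ℝ) :
    lowerGamma n y / Gamma n = 1 - exp (-y) * ∑ μ ∈ Finset.range n, y ^ μ / μ ! := by
  obtain ⟨m, rfl⟩ := Nat.exists_eq_add_of_le' hn
  simp only [lowerGamma, cast_add_one, add_sub_cancel_right, rpow_natCast,
    integral_pow_mul_exp_neg, Gamma_nat_eq_factorial]
  field_simp

theorem integral_rpow_mul_sub_pow {s t : ℝ} (hs : 0 < s) (ht : 0 ≤ t) (μ : ℕ) :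
    ∫ b in (0:ℝ)..t, b ^ (s - 1) * (t - b) ^ μ =
      ∑ ν ∈ Finset.range (μ + 1),
        (μ.choose ν : ℝ) * (-1) ^ (μ - ν) * t ^ (s + μ) / (s + μ - ν) := by
  have hexponent (ν : ℕ) : -1 < s - 1 + (μ - ν : ℕ) := by
    have := (μ - ν : ℕ).cast_nonneg (α := ℝ); linarith
  have hexpand : ∀ᵐ b, b ∈ uIoc (0:ℝ) t → b ^ (s - 1) * (t - b) ^ μ =
      ∑ ν ∈ Finset.range (μ + 1),
        (μ.choose ν : ℝ) * (-1) ^ (μ - ν) * t ^ ν * b ^ (s - 1 + (μ - ν : ℕ)) := by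
    refine Filter.Eventually.of_forall fun b hb => ?_
    rw [uIoc_of_le ht] at hb
    rw [sub_eq_add_neg t b, add_pow, Finset.mul_sum]
    refine Finset.sum_congr rfl fun ν _ => ?_
    rw [rpow_add_natCast hb.1.ne', neg_pow]
    ring
  rw [integral_congr_ae hexpand, integral_finsetSum fun ν _ =>
    (intervalIntegrable_rpow' (hexponent ν)).const_mul _]
  refine Finset.sum_congr rfl fun ν hν => ?_
  have hνμ : (ν : ℝ) ≤ μ := by exact_mod_cast Finset.mem_range_succ_iff.1 hν
  have hsucc : s - 1 + (μ - ν : ℕ) + 1 = s + μ - ν := by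
    rw [Nat.cast_sub (by exact_mod_cast hνμ)]; ring
  have hpow : t ^ ν * t ^ (s + μ - ν) = t ^ (s + μ) := by
    rw [← rpow_natCast, ← rpow_add' ht (by ring_nf; positivity)]
    ring_nf
  rw [intervalIntegral.integral_const_mul, integral_rpow (Or.inl (hexponent ν)), hsucc,
    zero_rpow (by linarith : s + μ - ν ≠ 0), sub_zero, ← hpow]
  ring

noncomputable def gammaScalePDF (k θ x : ℝ) : ℝ := x ^ (k - 1) * exp (-x / θ) / (Gamma k * θ ^ k)

section GammaScale

variable {k θ : ℝ}

theorem gammaScalePDF_nonneg (hk : 0 < k) (hθ : 0 < θ) {x : ℝ} (hx : 0 ≤ x) :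
    0 ≤ gammaScalePDF k θ x := by
  have := Gamma_pos_of_pos hk
  unfold gammaScalePDF
  positivity

theorem intervalIntegrable_gammaScalePDF (hk : 0 < k) (θ a b : ℝ) :
    IntervalIntegrable (gammaScalePDF k θ) volume a b :=
  ((intervalIntegrable_rpow' (by linarith)).mul_continuousOn (by fun_prop)).div_const _

theorem integral_gammaScalePDF_nonneg (hk : 0 < k) (hθ : 0 < θ) {x : ℝ} (hx : 0 ≤ x) :
    0 ≤ ∫ y in (0:ℝ)..x, gammaScalePDF k θ y :=
  integral_nonneg hx fun _ hy => gammaScalePDF_nonneg hk hθ hy.1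

theorem integral_gammaScalePDF (hθ : 0 < θ) {x : ℝ} (hx : 0 ≤ x) :
    ∫ y in (0:ℝ)..x, gammaScalePDF k θ y = lowerGamma k (x / θ) / Gamma k := by
  have hpoint : EqOn (gammaScalePDF k θ)
      (fun y => (y / θ) ^ (k - 1) * exp (-(y / θ)) / (θ * Gamma k)) (uIcc 0 x) := by
    intro y hy
    rw [uIcc_of_le hx] at hy
    simp only [gammaScalePDF, div_rpow hy.1 hθ.le, rpow_sub_one hθ.ne', neg_div]
    field_simp
  rw [integral_congr hpoint, intervalIntegral.integral_div,
    intervalIntegral.integral_comp_div (fun u => u ^ (k - 1) * exp (-u)) hθ.ne', zero_div,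
    lowerGamma, smul_eq_mul, mul_div_mul_left _ _ hθ.ne']

theorem gammaScaleMeasure_eq_withDensity (k θ : ℝ) :
    gammaScaleMeasure k θ =
      (volume.restrict (Ioi 0)).withDensity fun x => ENNReal.ofReal (gammaScalePDF k θ x) := by
  rw [gammaScaleMeasure, ← withDensity_indicator measurableSet_Ioi]
  congr with x

instance (k θ : ℝ) : NullSingletonClass (gammaScaleMeasure k θ) := by
  unfold gammaScaleMeasure
  infer_instance

theorem ae_nonneg_gammaScaleMeasure : ∀ᵐ x ∂gammaScaleMeasure k θ, 0 ≤ x := by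
  rw [gammaScaleMeasure_eq_withDensity]
  exact (withDensity_absolutelyContinuous _ _).ae_le
    ((ae_restrict_mem measurableSet_Ioi).mono fun _ hx => le_of_lt hx)

theorem gammaScaleMeasure_Iio_of_nonpos {x : ℝ} (hx : x ≤ 0) :
    gammaScaleMeasure k θ (Iio x) = 0 := by
  rw [gammaScaleMeasure_eq_withDensity, withDensity_apply _ measurableSet_Iio,
    Measure.restrict_restrict measurableSet_Iio, Iio_inter_Ioi, Ioo_eq_empty (not_lt.2 hx),
    Measure.restrict_empty, lintegral_zero_measure]

theorem gammaScaleMeasure_Iic (hk : 0 < k) (hθ : 0 < θ) {x : ℝ} (hx : 0 ≤ x) :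
    gammaScaleMeasure k θ (Iic x) = ENNReal.ofReal (∫ y in (0:ℝ)..x, gammaScalePDF k θ y) := by
  rw [gammaScaleMeasure_eq_withDensity, withDensity_apply _ measurableSet_Iic,
    Measure.restrict_restrict measurableSet_Iic, inter_comm, Ioi_inter_Iic, integral_of_le hx,
    ofReal_integral_eq_lintegral_ofReal (intervalIntegrable_gammaScalePDF hk θ 0 x).1
      (ae_restrict_of_forall_mem measurableSet_Ioc fun y hy => gammaScalePDF_nonneg hk hθ hy.1.le)]

theorem gammaScaleMeasure_Iio (hk : 0 < k) (hθ : 0 < θ) {x : ℝ} (hx : 0 ≤ x) :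
    gammaScaleMeasure k θ (Iio x) = ENNReal.ofReal (∫ y in (0:ℝ)..x, gammaScalePDF k θ y) := by
  rw [measure_congr Iio_ae_eq_Iic, gammaScaleMeasure_Iic hk hθ hx]

theorem lintegral_gammaScaleMeasure {f : ℝ → ENNReal} (hf : Measurable f) :
    ∫⁻ x, f x ∂gammaScaleMeasure k θ =
      ∫⁻ x in Ioi 0, ENNReal.ofReal (gammaScalePDF k θ x) * f x := by
  rw [gammaScaleMeasure_eq_withDensity,
    lintegral_withDensity_eq_lintegral_mul _ (by unfold gammaScalePDF; fun_prop) hf]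
  rfl

end GammaScale

theorem lintegral_gammaScaleMeasure_Iio_sub {ka kb θ t : ℝ} (hka : 0 < ka) (hkb : 0 < kb)
    (hθ : 0 < θ) (ht : 0 ≤ t) :
    ∫⁻ b, gammaScaleMeasure ka θ (Iio (t - b)) ∂gammaScaleMeasure kb θ =
      ENNReal.ofReal
        (∫ b in (0:ℝ)..t, gammaScalePDF kb θ b * ∫ a in (0:ℝ)..t - b, gammaScalePDF ka θ a) := by
  have hanti : Antitone fun b => gammaScaleMeasure ka θ (Iio (t - b)) :=
    fun _ _ h => measure_mono (Iio_subset_Iio (by linarith))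
  have hcdf : Continuous fun b => ∫ a in (0:ℝ)..t - b, gammaScalePDF ka θ a :=
    (continuous_primitive (intervalIntegrable_gammaScalePDF hka θ) 0).comp (continuous_sub_left t)
  have htail : ∀ b ∈ Ioi t,
      ENNReal.ofReal (gammaScalePDF kb θ b) * gammaScaleMeasure ka θ (Iio (t - b)) = 0 :=
    fun b hb => by rw [gammaScaleMeasure_Iio_of_nonpos (by linarith [mem_Ioi.1 hb]), mul_zero]
  have hbody : ∀ b ∈ Ioc 0 t,
      ENNReal.ofReal (gammaScalePDF kb θ b) * gammaScaleMeasure ka θ (Iio (t - b)) =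
        ENNReal.ofReal (gammaScalePDF kb θ b * ∫ a in (0:ℝ)..t - b, gammaScalePDF ka θ a) :=
    fun b hb => by
      rw [gammaScaleMeasure_Iio hka hθ (sub_nonneg.2 hb.2),
        ENNReal.ofReal_mul (gammaScalePDF_nonneg hkb hθ hb.1.le)]
  rw [lintegral_gammaScaleMeasure hanti.measurable, ← Ioc_union_Ioi_eq_Ioi ht,
    lintegral_union measurableSet_Ioi (Ioc_disjoint_Ioi le_rfl),
    setLIntegral_congr_fun measurableSet_Ioi htail, lintegral_zero, add_zero,
    setLIntegral_congr_fun measurableSet_Ioc hbody, integral_of_le ht,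
    ofReal_integral_eq_lintegral_ofReal
      ((intervalIntegrable_gammaScalePDF hkb θ 0 t).mul_continuousOn hcdf.continuousOn).1
      (ae_restrict_of_forall_mem measurableSet_Ioc fun b hb =>
        mul_nonneg (gammaScalePDF_nonneg hkb hθ hb.1.le)
          (integral_gammaScalePDF_nonneg hka hθ (sub_nonneg.2 hb.2)))]

theorem integral_gammaScalePDF_mul_primitive_natCast {n : ℕ} (hn : 1 ≤ n)
    {s θ t : ℝ} (hs : 0 < s) (hθ : 0 < θ) (ht : 0 ≤ t) :
    ∫ b in (0:ℝ)..t, gammaScalePDF s θ b * ∫ a in (0:ℝ)..t - b, gammaScalePDF n θ a =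
      lowerGamma s (t / θ) / Gamma s - exp (-t / θ) / (Gamma s * θ ^ s) *
        ∑ μ ∈ Finset.range n, 1 / (μ ! * θ ^ μ) *
          ∑ ν ∈ Finset.range (μ + 1),
            (μ.choose ν : ℝ) * (-1) ^ (μ - ν) * t ^ (s + μ) / (s + μ - ν) := by
  have hΓ := (Gamma_pos_of_pos hs).ne'
  have hθs := (rpow_pos_of_pos hθ s).ne'
  have hterm (μ : ℕ) : IntervalIntegrable (fun b => exp (-t / θ) / (Gamma s * θ ^ s * (μ ! * θ ^ μ)) *
      (b ^ (s - 1) * (t - b) ^ μ)) volume 0 t :=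
    ((intervalIntegrable_rpow' (by linarith)).mul_continuousOn (by fun_prop)).const_mul _
  have hpoint : EqOn (fun b => gammaScalePDF s θ b * ∫ a in (0:ℝ)..t - b, gammaScalePDF n θ a)
      (fun b => gammaScalePDF s θ b - ∑ μ ∈ Finset.range n,
        exp (-t / θ) / (Gamma s * θ ^ s * (μ ! * θ ^ μ)) * (b ^ (s - 1) * (t - b) ^ μ))
      (uIcc 0 t) := by
    intro b hb
    rw [uIcc_of_le ht] at hb
    have hexp : exp (-b / θ) * exp (-((t - b) / θ)) = exp (-t / θ) := by
      rw [← exp_add]; congr 1; field_simp; ring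
    simp only [integral_gammaScalePDF hθ (sub_nonneg.2 hb.2), lowerGamma_natCast_div_Gamma hn,
      mul_sub, mul_one, Finset.mul_sum]
    congr 1
    refine Finset.sum_congr rfl fun μ _ => ?_
    rw [gammaScalePDF, div_pow, ← hexp]
    field_simp
  rw [integral_congr hpoint, integral_sub (intervalIntegrable_gammaScalePDF hs θ 0 t)
    (by simpa only [Finset.sum_fn] using IntervalIntegrable.sum _ fun μ _ => hterm μ),
    integral_gammaScalePDF hθ ht,
    integral_finsetSum fun μ _ => hterm μ, Finset.mul_sum]
  congr 1
  refine Finset.sum_congr rfl fun μ _ => ?_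
  rw [intervalIntegral.integral_const_mul, integral_rpow_mul_sub_pow hs ht,
    ← mul_assoc (exp (-t / θ) / (Gamma s * θ ^ s))]
  congr 1
  field_simp

section Events

variable {Ω : Type*} [MeasurableSpace Ω] {P : Measure Ω} [IsFiniteMeasure P] {A B : Ω → ℝ}

theorem measure_sub_le_and_le_eq_sub (hA : Measurable A) (hB : Measurable B)
    (hB0 : ∀ᵐ ω ∂P, 0 ≤ B ω) (t : ℝ) :
    P {ω | t - B ω ≤ A ω ∧ A ω ≤ t} = P.map A (Iic t) - P {ω | A ω + B ω < t} := by
  have hsum : MeasurableSet {ω | A ω + B ω < t} := measurableSet_lt (hA.add hB) measurable_const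
  have hsub : {ω | A ω + B ω < t} ≤ᵐ[P] {ω | A ω ≤ t} := by
    filter_upwards [hB0] with ω hω (hlt : A ω + B ω < t) using show A ω ≤ t by linarith
  have hdiff : {ω | t - B ω ≤ A ω ∧ A ω ≤ t} = {ω | A ω ≤ t} \ {ω | A ω + B ω < t} := by
    ext ω
    simp only [mem_ofPred_eq, mem_sdiff, not_lt]
    constructor <;> rintro ⟨h₁, h₂⟩ <;> constructor <;> linarith
  rw [hdiff, measure_sdiff' _ hsum.nullMeasurableSet (measure_ne_top _ _),
    measure_congr (union_ae_eq_left_iff_ae_subset.2 hsub), Measure.map_apply hA measurableSet_Iic]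
  rfl

theorem ProbabilityTheory.IndepFun.measure_add_lt_eq_lintegral (hA : Measurable A)
    (hB : Measurable B) (hind : IndepFun A B P) (t : ℝ) :
    P {ω | A ω + B ω < t} = ∫⁻ b, P.map A (Iio (t - b)) ∂P.map B := by
  have hS : MeasurableSet {p : ℝ × ℝ | p.1 + p.2 < t} :=
    measurableSet_lt (measurable_fst.add measurable_snd) measurable_const
  change P ((fun ω => (A ω, B ω)) ⁻¹' {p : ℝ × ℝ | p.1 + p.2 < t}) = _
  rw [← Measure.map_apply (hA.prodMk hB) hS,
    (indepFun_iff_map_prod_eq_prod_map_map hA.aemeasurable hB.aemeasurable).1 hind,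
    Measure.prod_apply_symm hS]
  congr with b
  congr with a
  simp [lt_sub_iff_add_lt]

end Events

theorem conditional_success_probability (Ω : Type*) [MeasurableSpace Ω] (P : Measure Ω)
    [IsProbabilityMeasure P] (ka kb : ℕ) (hka : 1 ≤ ka) (hkb : 1 ≤ kb) (θ : ℝ)
    (hθ : 0 < θ) (A B : Ω → ℝ) (hAm : Measurable A) (hBm : Measurable B)
    (hA : Measure.map A P = gammaScaleMeasure ka θ)
    (hB : Measure.map B P = gammaScaleMeasure kb θ)
    (hind : IndepFun A B P) (t : ℝ) (ht : 0 < t) :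
    P {ω | t - B ω ≤ A ω ∧ A ω ≤ t} =
      ENNReal.ofReal
        (lowerGamma ka (t / θ) / Real.Gamma ka - lowerGamma kb (t / θ) / Real.Gamma kb +
          Real.exp (-t / θ) / (Real.Gamma kb * θ ^ kb) *
            ∑ μ ∈ Finset.range ka, (1 / (Nat.factorial μ * θ ^ μ)) *
              ∑ ν ∈ Finset.range (μ + 1),
                (Nat.choose μ ν : ℝ) * (-1 : ℝ) ^ (μ - ν) * t ^ (kb + μ) /
                  ((kb : ℝ) + (μ : ℝ) - (ν : ℝ))) := by
  have hka' : (0 : ℝ) < ka := by exact_mod_cast hka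
  have hkb' : (0 : ℝ) < kb := by exact_mod_cast hkb
  have hB0 : ∀ᵐ ω ∂P, 0 ≤ B ω :=
    ae_of_ae_map hBm.aemeasurable (hB ▸ ae_nonneg_gammaScaleMeasure)
  have hconv_nonneg :
      0 ≤ ∫ b in (0:ℝ)..t, gammaScalePDF kb θ b * ∫ a in (0:ℝ)..t - b, gammaScalePDF ka θ a :=
    integral_nonneg ht.le fun b hb => mul_nonneg (gammaScalePDF_nonneg hkb' hθ hb.1)
      (integral_gammaScalePDF_nonneg hka' hθ (sub_nonneg.2 hb.2))
  rw [measure_sub_le_and_le_eq_sub hAm hBm hB0, hind.measure_add_lt_eq_lintegral hAm hBm, hA, hB,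
    gammaScaleMeasure_Iic hka' hθ ht.le, lintegral_gammaScaleMeasure_Iio_sub hka' hkb' hθ ht.le,
    ← ENNReal.ofReal_sub _ hconv_nonneg, integral_gammaScalePDF hθ ht.le,
    integral_gammaScalePDF_mul_primitive_natCast hka hkb' hθ ht.le]
  congr 1
  simp only [← Nat.cast_add, rpow_natCast]
  ring
end
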